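/- Let Y be a discrete random variable and S a finite set of discrete random variables with Y ∉ S. If X ∈ S is contained in at least one but not all Markov boundaries of Y within S, then X is conditionally independent of Y given S \ {X}; equivalently, the conditional mutual information CMI(X, Y | S \ {X}) equals 0, regardless of the joint distribution's other features. -/

import Mathlib

/-!
A Markov boundary `M` of `y` with `X ∉ M` gives `y ⊥ S \ M | M`. Since `X ∈ S \ M` and
`M ∪ ((S \ M) \ {X}) = S \ {X}`, the weak union property of conditional independence turns
this into `y ⊥ X | S \ {X}`; weak union itself comes from marginalising out, one variable at a
time, the part of `S \ M` that is moved into the conditioning set. Conditional independence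
makes every logarithm in the conditional mutual information vanish.
-/

open scoped BigOperators

noncomputable section

/-- `p` is a probability mass function on the finite type `Ω`. -/
def IsDist {Ω : Type*} [Fintype Ω] (p : Ω → ℝ) : Prop :=
  (∀ w, 0 ≤ p w) ∧ ∑ w, p w = 1

/-- Total variation distance between two distributions on the same finite type. -/
def tvDist {Ω : Type*} [Fintype Ω] (p q : Ω → ℝ) : ℝ :=
  (∑ w, |p w - q w|) / 2

variable {ι : Type*} [Fintype ι] [DecidableEq ι]
variable {α : ι → Type*} [∀ i, Fintype (α i)] [∀ i, DecidableEq (α i)]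

/-- Marginal probability, under joint pmf `p`, of the event that the variables in the
collection `A` take the values prescribed by the configuration `x`. -/
def margProb (p : (∀ i, α i) → ℝ) (A : Finset ι) (x : ∀ i, α i) : ℝ :=
  ∑ w : ∀ i, α i, if ∀ i ∈ A, w i = x i then p w else 0

/-- Conditional independence of the collections `A` and `B` given the collection `C`:
`f(a, b | c) = f(a | c) f(b | c)` whenever `f(c) > 0` (stated in multiplied-out form). -/
def CondIndep (p : (∀ i, α i) → ℝ) (A B C : Finset ι) : Prop :=
  ∀ x : ∀ i, α i, 0 < margProb p C x →
    margProb p (A ∪ B ∪ C) x * margProb p C x =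
      margProb p (A ∪ C) x * margProb p (B ∪ C) x

/-- `M` is a Markov blanket of the variable `y` within the collection `T`. -/
def MarkovBlanket (p : (∀ i, α i) → ℝ) (y : ι) (T M : Finset ι) : Prop :=
  M ⊆ T ∧ CondIndep p {y} (T \ M) M

/-- `M` is a Markov boundary of `y` within `T`: a Markov blanket no proper subset of
which is a Markov blanket. -/
def MarkovBoundary (p : (∀ i, α i) → ℝ) (y : ι) (T M : Finset ι) : Prop :=
  MarkovBlanket p y T M ∧ ∀ M' ⊂ M, ¬ MarkovBlanket p y T M'

/-- Mutual information between the collections `A` and `B`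
(with the convention `0 · log(junk) = 0` on zero-probability terms). -/
def MI (p : (∀ i, α i) → ℝ) (A B : Finset ι) : ℝ :=
  ∑ w : ∀ i, α i, p w *
    Real.log (margProb p (A ∪ B) w / (margProb p A w * margProb p B w))

/-- Conditional mutual information between collections `A` and `B` given `C`
(with the convention `0 · log(junk) = 0` on zero-probability terms). -/
def CMI (p : (∀ i, α i) → ℝ) (A B C : Finset ι) : ℝ :=
  ∑ w : (∀ i, α i), p w *
    Real.log ((margProb p (A ∪ B ∪ C) w * margProb p C w) /
      (margProb p (A ∪ C) w * margProb p (B ∪ C) w))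

section Marginals

variable (p : (∀ i, α i) → ℝ)

lemma margProb_congr (A : Finset ι) {x x' : ∀ i, α i} (h : ∀ i ∈ A, x i = x' i) :
    margProb p A x = margProb p A x' := by
  refine Finset.sum_congr rfl fun w _ => if_congr ?_ rfl rfl
  exact forall₂_congr fun i hi => by rw [h i hi]

lemma margProb_anti (hp : ∀ w, 0 ≤ p w) {A B : Finset ι} (hAB : A ⊆ B) (x : ∀ i, α i) :
    margProb p B x ≤ margProb p A x := by
  refine Finset.sum_le_sum fun w _ => ?_
  by_cases h : ∀ i ∈ B, w i = x i
  · rw [if_pos h, if_pos fun i hi => h i (hAB hi)]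
  · rw [if_neg h]
    split_ifs <;> simp [hp w]

lemma le_margProb (hp : ∀ w, 0 ≤ p w) (A : Finset ι) (x : ∀ i, α i) : p x ≤ margProb p A x :=
  (margProb_anti p hp A.subset_univ x).trans_eq' <| by simp [margProb, ← funext_iff]

lemma sum_margProb_update {A : Finset ι} {X : ι} (hX : X ∈ A) (x : ∀ i, α i) :
    ∑ t : α X, margProb p A (Function.update x X t) = margProb p (A.erase X) x := by
  unfold margProb
  rw [Finset.sum_comm]
  refine Finset.sum_congr rfl fun w _ => ?_
  have agree : ∀ t : α X, (∀ i ∈ A, w i = Function.update x X t i) ↔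
      (t = w X ∧ ∀ i ∈ A.erase X, w i = x i) := fun t => by
    rw [← Finset.insert_erase hX, Finset.forall_mem_insert, Function.update_self, eq_comm,
      Finset.erase_insert_eq_erase, Finset.erase_idem]
    refine and_congr_right' <| forall₂_congr fun i hi => ?_
    rw [Function.update_of_ne (Finset.ne_of_mem_erase hi)]
  simp_rw [agree, ite_and, Finset.sum_ite_eq', Finset.mem_univ, if_true]

end Marginals

namespace CondIndep

variable {p : (∀ i, α i) → ℝ} {A B C : Finset ι}

lemma symm (h : CondIndep p A B C) : CondIndep p B A C := fun x hx => by
  rw [Finset.union_comm B A, h x hx, mul_comm]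

lemma erase_right (h : CondIndep p A B C) {X : ι} (hXB : X ∈ B) (hXA : X ∉ A) (hXC : X ∉ C) :
    CondIndep p A (B.erase X) C := by
  intro x hx
  have fixed : ∀ {D : Finset ι}, X ∉ D → ∀ t,
      margProb p D (Function.update x X t) = margProb p D x :=
    fun hXD t => margProb_congr p _ fun i hi =>
      Function.update_of_ne (ne_of_mem_of_not_mem hi hXD) t x
  have hXAC : X ∉ A ∪ C := by simp [hXA, hXC]
  have summed := Finset.sum_congr rfl fun t (_ : t ∈ Finset.univ) =>
    h (Function.update x X t) (by rwa [fixed hXC])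
  simp only [fixed hXC, fixed hXAC] at summed
  rw [← Finset.sum_mul, ← Finset.mul_sum, sum_margProb_update p (by simp [hXB]),
    sum_margProb_update p (by simp [hXB])] at summed
  convert summed using 3 <;> ext i <;> simp only [Finset.mem_union, Finset.mem_erase] <;>
    grind

lemma of_subset_right (h : CondIndep p A B C) (hAB : Disjoint A B) (hBC : Disjoint B C)
    {D : Finset ι} (hDB : D ⊆ B) : CondIndep p A D C := by
  suffices ∀ E ⊆ B, CondIndep p A (B \ E) C by
    simpa [Finset.sdiff_sdiff_eq_self hDB] using this (B \ D) Finset.sdiff_subset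
  intro E
  induction E using Finset.induction_on with
  | empty => simpa using h
  | insert a E haE ih =>
    intro hE
    have haB := hE (Finset.mem_insert_self a E)
    rw [Finset.sdiff_insert]
    exact (ih ((Finset.subset_insert a E).trans hE)).erase_right
      (Finset.mem_sdiff.2 ⟨haB, haE⟩) (Finset.disjoint_right.1 hAB haB)
      (Finset.disjoint_left.1 hBC haB)

lemma weak_union (h : CondIndep p A B C) (hp : ∀ w, 0 ≤ p w) (hAB : Disjoint A B)
    (hBC : Disjoint B C) {D : Finset ι} (hDB : D ⊆ B) : CondIndep p A (B \ D) (C ∪ D) := by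
  intro x hx
  have hCx : 0 < margProb p C x := hx.trans_le (margProb_anti p hp Finset.subset_union_left x)
  have hAD := h.of_subset_right hAB hBC hDB x hCx
  have hB := h x hCx
  have hABD : A ∪ B \ D ∪ (C ∪ D) = A ∪ B ∪ C := by
    ext i; have := @hDB i; simp only [Finset.mem_union, Finset.mem_sdiff]; tauto
  have hBD : B \ D ∪ (C ∪ D) = B ∪ C := by
    ext i; have := @hDB i; simp only [Finset.mem_union, Finset.mem_sdiff]; tauto
  rw [hABD, hBD, Finset.union_comm C D, ← Finset.union_assoc]
  refine mul_left_cancel₀ hCx.ne' ?_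
  linear_combination margProb p (D ∪ C) x * hB - margProb p (B ∪ C) x * hAD

lemma cmi_eq_zero (h : CondIndep p A B C) (hp : ∀ w, 0 ≤ p w) : CMI p A B C = 0 := by
  refine Finset.sum_eq_zero fun w _ => ?_
  rcases (hp w).eq_or_lt with hw | hw
  · rw [← hw, zero_mul]
  · have pos : ∀ D, 0 < margProb p D w := fun D => hw.trans_le (le_margProb p hp D w)
    rw [h w (pos C), div_self (mul_pos (pos _) (pos _)).ne', Real.log_one, mul_zero]

end CondIndep

variable [∀ i, Nonempty (α i)]

theorem cmi_zero_of_markov_boundary_multiplicity_general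
    (p : (∀ i, α i) → ℝ) (hp : IsDist p)
    (y X : ι) (S : Finset ι) (hyS : y ∉ S) (hXS : X ∈ S)
    (hout : ∃ M, MarkovBoundary p y S M ∧ X ∉ M) :
    CondIndep p {X} {y} (S.erase X) ∧ CMI p {X} {y} (S.erase X) = 0 := by
  obtain ⟨M, ⟨⟨hMS, hM⟩, -⟩, hXM⟩ := hout
  have hX : X ∈ S \ M := Finset.mem_sdiff.2 ⟨hXS, hXM⟩
  have hindep := (hM.weak_union hp.1
    (Finset.disjoint_singleton_left.2 fun hy => hyS (Finset.mem_sdiff.1 hy).1)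
    Finset.sdiff_disjoint (Finset.erase_subset X (S \ M))).symm
  have hcond : M ∪ (S \ M).erase X = S.erase X := by
    ext i; have := @hMS i; simp only [Finset.mem_union, Finset.mem_erase, Finset.mem_sdiff]; grind
  rw [Finset.sdiff_erase_self hX, hcond] at hindep
  exact ⟨hindep, hindep.cmi_eq_zero hp.1⟩

/-- Proposition 1(i): if `X` is contained in at least one but not all
Markov boundaries of `Y` within `S`, then `X ⊥ Y | S \ {X}`; equivalently
`CMI(X, Y | S \ {X}) = 0`. -/
theorem cmi_zero_of_markov_boundary_multiplicity
    (p : (∀ i, α i) → ℝ) (hp : IsDist p)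
    (y X : ι) (S : Finset ι) (hyS : y ∉ S) (hXS : X ∈ S)
    (hin : ∃ M, MarkovBoundary p y S M ∧ X ∈ M)
    (hout : ∃ M, MarkovBoundary p y S M ∧ X ∉ M) :
    CondIndep p {X} {y} (S.erase X) ∧ CMI p {X} {y} (S.erase X) = 0 :=
  cmi_zero_of_markov_boundary_multiplicity_general p hp y X S hyS hXS hout

end
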